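/- arXiv:2003.00730 — 3 statements merged into one kernel-verified Lean document; each statement's English description precedes it below -/
import Mathlib

section
/- The tetrahedral group T(5,3;2,2;2,3), presented as ⟨f1, f2, f3, f4 | f1^2 = f2^2 = f3^2 = f4^3 = 1, f1 f2 f3 f4 = 1, (f1 f2)^5 = 1, (f2 f4)^3 = 1⟩, admits a surjective homomorphism onto the alternating group A5. -/
open FreeGroup

/-- The relators of the tetrahedral group `T(n,m;2,2;c,3)` on generators
`f1 = of 0, f2 = of 1, f3 = of 2, f4 = of 3`:
`f1^c = f2^2 = f3^2 = f4^3 = 1`, `f1 f2 f3 f4 = 1`, `(f1 f2)^n = 1`, `(f2 f4)^m = 1`. -/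
def tetRels (n m c : ℕ) : Set (FreeGroup (Fin 4)) :=
  {of 0 ^ c, of 1 ^ 2, of 2 ^ 2, of 3 ^ 3,
   of 0 * of 1 * of 2 * of 3, (of 0 * of 1) ^ n, (of 1 * of 3) ^ m}

namespace TetA5

open Equiv Equiv.Perm

/-- a = (1 2)(3 4) -/
def a : Perm (Fin 5) := Equiv.swap 1 2 * Equiv.swap 3 4
/-- b = (0 1)(2 3) -/
def b : Perm (Fin 5) := Equiv.swap 0 1 * Equiv.swap 2 3
/-- c = (0 1)(2 4) -/
def c : Perm (Fin 5) := Equiv.swap 0 1 * Equiv.swap 2 4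
/-- d = (1 3 2) -/
def d : Perm (Fin 5) := Equiv.swap 1 3 * Equiv.swap 2 3

theorem mem_alt : a ∈ alternatingGroup (Fin 5) ∧ b ∈ alternatingGroup (Fin 5) ∧
    c ∈ alternatingGroup (Fin 5) ∧ d ∈ alternatingGroup (Fin 5) := by
  simp only [Equiv.Perm.mem_alternatingGroup]
  decide

/-- the map on generators -/
def g : Fin 4 → alternatingGroup (Fin 5) :=
  ![⟨a, mem_alt.1⟩, ⟨b, mem_alt.2.1⟩, ⟨c, mem_alt.2.2.1⟩, ⟨d, mem_alt.2.2.2⟩]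

set_option maxRecDepth 100000 in
theorem cover (σ : Perm (Fin 5)) (h3 : σ ^ 3 = 1) (h1 : σ ≠ 1) :
    σ = d ∨ σ = a*d ∨ σ = b*c ∨ σ = b*d ∨ σ = c*b ∨ σ = d*b ∨ σ = d*d ∨ σ = a*c*b ∨
    σ = b*a*c ∨ σ = b*c*a ∨ σ = b*d*b ∨ σ = b*d*c ∨ σ = b*d*d ∨ σ = c*a*b ∨ σ = d*b*d ∨
    σ = d*c*b ∨ σ = d*d*b ∨ σ = a*d*b*a ∨ σ = b*c*a*c ∨ σ = c*a*c*b := by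
  revert h3 h1; revert σ; decide

theorem perm_closure : Subgroup.closure {a, b, c, d} = alternatingGroup (Fin 5) := by
  apply le_antisymm
  · rw [Subgroup.closure_le]
    rintro x (rfl | rfl | rfl | rfl) <;>
      simp only [SetLike.mem_coe, Equiv.Perm.mem_alternatingGroup] <;> decide
  · rw [← closure_three_cycles_eq_alternating, Subgroup.closure_le]
    intro σ hσ
    have ha : a ∈ Subgroup.closure {a, b, c, d} :=
      Subgroup.subset_closure (by simp)
    have hb : b ∈ Subgroup.closure {a, b, c, d} :=
      Subgroup.subset_closure (by simp)
    have hc : c ∈ Subgroup.closure {a, b, c, d} :=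
      Subgroup.subset_closure (by simp)
    have hd : d ∈ Subgroup.closure {a, b, c, d} :=
      Subgroup.subset_closure (by simp)
    have h3 : σ ^ 3 = 1 := by
      rw [← orderOf_dvd_iff_pow_eq_one, hσ.orderOf]
    have h1 : σ ≠ 1 := by
      intro h; rw [h] at hσ
      simp [Equiv.Perm.IsThreeCycle, Equiv.Perm.cycleType_one] at hσ
    rcases cover σ h3 h1 with rfl|rfl|rfl|rfl|rfl|rfl|rfl|rfl|rfl|rfl|rfl|rfl|rfl|rfl|rfl|rfl|rfl|rfl|rfl|rfl
    · exact hd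
    · exact mul_mem ha hd
    · exact mul_mem hb hc
    · exact mul_mem hb hd
    · exact mul_mem hc hb
    · exact mul_mem hd hb
    · exact mul_mem hd hd
    · exact mul_mem (mul_mem ha hc) hb
    · exact mul_mem (mul_mem hb ha) hc
    · exact mul_mem (mul_mem hb hc) ha
    · exact mul_mem (mul_mem hb hd) hb
    · exact mul_mem (mul_mem hb hd) hc
    · exact mul_mem (mul_mem hb hd) hd
    · exact mul_mem (mul_mem hc ha) hb
    · exact mul_mem (mul_mem hd hb) hd
    · exact mul_mem (mul_mem hd hc) hb
    · exact mul_mem (mul_mem hd hd) hb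
    · exact mul_mem (mul_mem (mul_mem ha hd) hb) ha
    · exact mul_mem (mul_mem (mul_mem hb hc) ha) hc
    · exact mul_mem (mul_mem (mul_mem hc ha) hc) hb

theorem rels_hold : ∀ r ∈ tetRels 5 3 2, FreeGroup.lift g r = 1 := by
  intro r hr
  rcases hr with rfl | rfl | rfl | rfl | rfl | rfl | rfl <;>
    simp only [map_pow, _root_.map_mul, FreeGroup.lift_apply_of] <;> decide

end TetA5

/-- The tetrahedral group `T(5,3;2,2;2,3)` surjects onto the alternating group `A5`. -/
theorem tet_5_3_2_surjects_onto_A5 :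
    ∃ φ : PresentedGroup (tetRels 5 3 2) →* alternatingGroup (Fin 5),
      Function.Surjective φ := by
  refine ⟨PresentedGroup.toGroup TetA5.rels_hold, ?_⟩
  rw [← MonoidHom.range_eq_top]
  have hcomp : (⇑(PresentedGroup.toGroup TetA5.rels_hold)) ∘
      (PresentedGroup.of (rels := tetRels 5 3 2)) = TetA5.g :=
    funext fun i => PresentedGroup.toGroup.of TetA5.rels_hold
  have h1 : (PresentedGroup.toGroup TetA5.rels_hold).range
      = Subgroup.closure (Set.range TetA5.g) := by
    rw [MonoidHom.range_eq_map, ← PresentedGroup.closure_range_of (tetRels 5 3 2),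
      MonoidHom.map_closure, ← Set.range_comp, hcomp]
  rw [h1]
  have hinj : Function.Injective (alternatingGroup (Fin 5)).subtype := Subtype.coe_injective
  apply Subgroup.map_injective hinj
  have himg : (⇑(alternatingGroup (Fin 5)).subtype '' Set.range TetA5.g)
      = {TetA5.a, TetA5.b, TetA5.c, TetA5.d} := by
    ext x
    constructor
    · rintro ⟨y, ⟨i, rfl⟩, rfl⟩
      fin_cases i <;> simp [TetA5.g]
    · rintro (rfl | rfl | rfl | rfl)
      exacts [⟨TetA5.g 0, ⟨0, rfl⟩, rfl⟩, ⟨TetA5.g 1, ⟨1, rfl⟩, rfl⟩,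
        ⟨TetA5.g 2, ⟨2, rfl⟩, rfl⟩, ⟨TetA5.g 3, ⟨3, rfl⟩, rfl⟩]
  rw [MonoidHom.map_closure, himg, TetA5.perm_closure, ← MonoidHom.range_eq_map,
    Subgroup.range_subtype]
end

section
/- The tetrahedral group T(4,4;2,2;3,3), presented as ⟨f1, f2, f3, f4 | f1^3 = f2^2 = f3^2 = f4^3 = 1, f1 f2 f3 f4 = 1, (f1 f2)^4 = 1, (f2 f4)^4 = 1⟩, admits a surjective homomorphism onto the simple group PSL(2,7) of order 168. -/
open FreeGroup Matrix

/-- The projective special linear group `PSL(2,q)`. -/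
abbrev PSL2 (q : ℕ) :=
  SpecialLinearGroup (Fin 2) (ZMod q) ⧸
    Subgroup.center (SpecialLinearGroup (Fin 2) (ZMod q))

namespace TetAux

instance : Fact (Nat.Prime 7) := ⟨by norm_num⟩

abbrev S7 := SpecialLinearGroup (Fin 2) (ZMod 7)

instance : DecidableEq S7 := fun a b => decidable_of_iff (a.1 = b.1) Subtype.ext_iff.symm

def mA : S7 := ⟨!![0,1;6,1], by decide⟩
def mB : S7 := ⟨!![1,1;5,6], by decide⟩
def mC : S7 := ⟨!![6,3;4,1], by decide⟩
def mD : S7 := ⟨!![3,0;5,5], by decide⟩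
def mN : S7 := ⟨!![6,0;0,6], by decide⟩

def uu (t : ZMod 7) : S7 := ⟨!![1,t;0,1], by simp [Matrix.det_fin_two_of]⟩
def ll (t : ZMod 7) : S7 := ⟨!![1,0;t,1], by simp [Matrix.det_fin_two_of]⟩

lemma hN_center : mN ∈ Subgroup.center S7 := by
  rw [Matrix.SpecialLinearGroup.mem_center_iff]
  refine ⟨6, by decide, ?_⟩
  show Matrix.scalar (Fin 2) (6 : ZMod 7) = (mN : Matrix (Fin 2) (Fin 2) (ZMod 7))
  ext i j
  fin_cases i <;> fin_cases j <;> simp [mN, Matrix.scalar_apply] <;> rfl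

lemma center_eq : Subgroup.center S7 = Subgroup.zpowers mN := by
  refine le_antisymm ?_ (Subgroup.zpowers_le.mpr hN_center)
  intro A hA
  obtain ⟨r, hr2, hrA⟩ := Matrix.SpecialLinearGroup.mem_center_iff.mp hA
  have key : ∀ r : ZMod 7, r ^ Fintype.card (Fin 2) = 1 → r = 1 ∨ r = 6 := by decide
  rcases key r hr2 with rfl | rfl
  · have hA1 : A = 1 := by
      apply Subtype.ext
      rw [← hrA]
      ext i j
      fin_cases i <;> fin_cases j <;> simp [Matrix.scalar_apply, Matrix.one_apply]
    rw [hA1]; exact Subgroup.one_mem _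
  · have hAN : A = mN := by
      apply Subtype.ext
      rw [← hrA]
      ext i j
      fin_cases i <;> fin_cases j <;> simp [mN, Matrix.scalar_apply] <;> rfl
    rw [hAN]; exact Subgroup.mem_zpowers _

set_option maxHeartbeats 1000000 in
set_option maxRecDepth 20000 in
lemma card_S7 : Nat.card S7 = 336 := by
  rw [Nat.card_eq_fintype_card]; decide

lemma card_center : Nat.card (Subgroup.center S7) = 2 := by
  rw [center_eq, Nat.card_zpowers]
  exact orderOf_eq_prime (by decide) (by decide)

lemma card_PSL : Nat.card (PSL2 7) = 168 := by
  have h := Subgroup.card_eq_card_quotient_mul_card_subgroup (Subgroup.center S7)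
  rw [card_S7, card_center] at h
  show Nat.card (S7 ⧸ Subgroup.center S7) = 168
  omega

def mgen : Fin 4 → S7 := ![mA, mB, mC, mD]

abbrev π7 : S7 →* PSL2 7 := QuotientGroup.mk' (Subgroup.center S7)

def fgen : Fin 4 → PSL2 7 := fun i => π7 (mgen i)

lemma lift_eq (r : FreeGroup (Fin 4)) :
    FreeGroup.lift fgen r = π7 (FreeGroup.lift mgen r) := by
  have h : (FreeGroup.lift fgen : FreeGroup (Fin 4) →* PSL2 7)
      = π7.comp (FreeGroup.lift mgen) := by
    ext i
    simp [fgen]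
  rw [h, MonoidHom.comp_apply]

lemma hrels : ∀ r ∈ tetRels 4 4 3, FreeGroup.lift fgen r = 1 := by
  have hmem : ∀ x : S7, x ∈ Subgroup.center S7 → π7 x = 1 :=
    fun x hx => (QuotientGroup.eq_one_iff x).mpr hx
  intro r hr
  simp only [tetRels, Set.mem_insert_iff, Set.mem_singleton_iff] at hr
  rcases hr with rfl | rfl | rfl | rfl | rfl | rfl | rfl <;>
      (rw [lift_eq]; apply hmem) <;>
      simp only [_root_.map_pow, _root_.map_mul, FreeGroup.lift_apply_of, mgen]
  · rw [show (![mA, mB, mC, mD] 0 : S7) ^ 3 = mN from by decide]; exact hN_center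
  · rw [show (![mA, mB, mC, mD] 1 : S7) ^ 2 = mN from by decide]; exact hN_center
  · rw [show (![mA, mB, mC, mD] 2 : S7) ^ 2 = mN from by decide]; exact hN_center
  · rw [show (![mA, mB, mC, mD] 3 : S7) ^ 3 = mN from by decide]; exact hN_center
  · rw [show (![mA, mB, mC, mD] 0 * ![mA, mB, mC, mD] 1 * ![mA, mB, mC, mD] 2
        * ![mA, mB, mC, mD] 3 : S7) = 1 from by decide]
    exact Subgroup.one_mem _
  · rw [show ((![mA, mB, mC, mD] 0 * ![mA, mB, mC, mD] 1 : S7)) ^ 4 = mN from by decide]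
    exact hN_center
  · rw [show ((![mA, mB, mC, mD] 1 * ![mA, mB, mC, mD] 3 : S7)) ^ 4 = mN from by decide]
    exact hN_center

lemma generates : ∀ g : S7, g ∈ Subgroup.closure ({mA, mD} : Set S7) := by
  set H := Subgroup.closure ({mA, mD} : Set S7) with hHdef
  have hA : mA ∈ H := Subgroup.subset_closure (by simp)
  have hD : mD ∈ H := Subgroup.subset_closure (by simp)
  have hu : ∀ t : ZMod 7, uu t ∈ H := by
    intro t
    rw [show uu t = (mD*mA*mD) ^ t.val from by revert t; decide]
    exact Subgroup.pow_mem _ (mul_mem (mul_mem hD hA) hD) _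
  have hl : ∀ t : ZMod 7, ll t ∈ H := by
    intro t
    rw [show ll t = (mA*mA*mD*mA*mD*mA*mA*mA) ^ t.val from by revert t; decide]
    exact Subgroup.pow_mem _
      (mul_mem (mul_mem (mul_mem (mul_mem (mul_mem (mul_mem (mul_mem hA hA) hD) hA) hD) hA) hA) hA) _
  have key : ∀ g : S7, g.1 1 0 ≠ 0 → g ∈ H := by
    intro g hc
    have hdet : g.1 0 0 * g.1 1 1 - g.1 0 1 * g.1 1 0 = 1 := by
      have := g.2; rwa [Matrix.det_fin_two] at this
    have hg : g = uu ((g.1 0 0 - 1) * (g.1 1 0)⁻¹) * ll (g.1 1 0)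
        * uu ((g.1 1 1 - 1) * (g.1 1 0)⁻¹) := by
      apply Subtype.ext
      rw [Matrix.SpecialLinearGroup.coe_mul, Matrix.SpecialLinearGroup.coe_mul]
      show g.1 = _
      ext i j
      fin_cases i <;> fin_cases j <;>
        simp [uu, ll, Matrix.mul_apply, Fin.sum_univ_succ] <;>
        field_simp <;> ring_nf <;>
        first
          | rfl
          | (field_simp at hdet ⊢;
             first
               | linear_combination hdet
               | linear_combination -2*hdet
               | linear_combination 2*hdet
               | linear_combination -hdet)
    rw [hg]
    exact mul_mem (mul_mem (hu _) (hl _)) (hu _)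
  intro g
  by_cases hc : g.1 1 0 ≠ 0
  · exact key g hc
  · push_neg at hc
    have hdet : g.1 0 0 * g.1 1 1 - g.1 0 1 * g.1 1 0 = 1 := by
      have := g.2; rwa [Matrix.det_fin_two] at this
    have hd : g.1 1 1 ≠ 0 := by
      intro h0
      rw [hc, h0] at hdet
      simp at hdet
    have h2 : (g * ll 1).1 1 0 ≠ 0 := by
      have : (g * ll 1).1 1 0 = g.1 1 0 + g.1 1 1 := by
        rw [Matrix.SpecialLinearGroup.coe_mul]
        simp [ll, Matrix.mul_apply, Fin.sum_univ_succ]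
      rw [this, hc, zero_add]
      exact hd
    have hgH : g = (g * ll 1) * (ll 1)⁻¹ := by group
    rw [hgH]
    exact mul_mem (key _ h2) (inv_mem (hl 1))

end TetAux

open TetAux in
/-- The tetrahedral group `T(4,4;2,2;3,3)` surjects onto the simple group
`PSL(2,7)` of order 168. -/
theorem tet_4_4_3_surjects_onto_PSL27 :
    Nat.card (PSL2 7) = 168 ∧
    ∃ φ : PresentedGroup (tetRels 4 4 3) →* PSL2 7, Function.Surjective φ := by
  refine ⟨card_PSL, PresentedGroup.toGroup hrels, ?_⟩
  have main : ∀ g : S7, ∃ y : PresentedGroup (tetRels 4 4 3),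
      PresentedGroup.toGroup hrels y = π7 g := by
    intro g
    refine Subgroup.closure_induction ?_ ?_ ?_ ?_ (generates g)
    · intro x hx
      rcases hx with rfl | rfl
      · exact ⟨PresentedGroup.of 0, by
          rw [PresentedGroup.toGroup.of]
          simp [fgen, mgen]⟩
      · exact ⟨PresentedGroup.of 3, by
          rw [PresentedGroup.toGroup.of]
          simp [fgen, mgen]⟩
    · exact ⟨1, by simp⟩
    · rintro x y _ _ ⟨a, ha⟩ ⟨b, hb⟩
      exact ⟨a * b, by simp [ha, hb]⟩
    · rintro x _ ⟨a, ha⟩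
      exact ⟨a⁻¹, by simp [ha]⟩
  intro q
  obtain ⟨g, rfl⟩ := QuotientGroup.mk'_surjective (Subgroup.center S7) q
  exact main g
end

section
/- The tetrahedral group T(5,5;2,2;2,3), presented as ⟨f1, f2, f3, f4 | f1^2 = f2^2 = f3^2 = f4^3 = 1, f1 f2 f3 f4 = 1, (f1 f2)^5 = 1, (f2 f4)^5 = 1⟩, admits a surjective homomorphism onto PSL(2,19). -/
/-!
Send the generators to suitable matrices in `SL(2, 19)`. Every relator evaluates to `±1`,
so this induces a homomorphism into `PSL(2, 19)`. Two short words in the generators evaluate to the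
elementary transvections `[[1, 1], [0, 1]]` and `[[1, 0], [1, 1]]`; their powers are all
the elementary transvections, which generate `SL(2)` over a field, so the map is onto already at the level of
`SL(2, 19)`.
-/

open FreeGroup Matrix

open MatrixGroups

theorem FreeGroup.lift_comp {α G H : Type*} [Group G] [Group H] (φ : G →* H) (f : α → G) :
    lift (φ ∘ f) = φ.comp (lift f) :=
  ext_hom _ _ fun a => by simp

theorem PresentedGroup.toGroup_surjective {α G : Type*} [Group G] {f : α → G}
    {rels : Set (FreeGroup α)} (h : ∀ r ∈ rels, lift f r = 1)
    (hf : Function.Surjective (lift f)) : Function.Surjective (toGroup h) :=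
  fun g => let ⟨x, hx⟩ := hf g; ⟨mk rels x, hx⟩

namespace Matrix.SpecialLinearGroup

theorem neg_one_mem_center {n R : Type*} [DecidableEq n] [Fintype n] [CommRing R]
    [Fact (Even (Fintype.card n))] : (-1 : SpecialLinearGroup n R) ∈ Subgroup.center _ :=
  mem_center_iff.mpr ⟨-1, (Fact.out : Even (Fintype.card n)).neg_one_pow, by
    rw [_root_.map_neg, _root_.map_one, coe_neg, coe_one]⟩

theorem transvection_pow {ι F : Type*} [DecidableEq ι] [Fintype ι] [CommRing F] {i j : ι}
    (hij : i ≠ j) (b : F) (n : ℕ) : transvection hij b ^ n = transvection hij (n * b) := by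
  induction n with
  | zero => simp
  | succ n ih => rw [pow_succ, ih, ← transvection_add]; push_cast; ring_nf

end Matrix.SpecialLinearGroup

open Matrix.SpecialLinearGroup

theorem Matrix.SL2.closure_transvection_one_eq_top (p : ℕ) [Fact p.Prime] :
    Subgroup.closure
      {SpecialLinearGroup.transvection (zero_ne_one : (0 : Fin 2) ≠ 1) (1 : ZMod p),
        SpecialLinearGroup.transvection (one_ne_zero : (1 : Fin 2) ≠ 0) 1} = ⊤ := by
  refine eq_top_iff.mpr fun A _ =>
    SL2.transvection_induction _ (fun i j hij c => ?_) (fun _ _ => mul_mem) A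
  rw [← mul_one c, ← ZMod.natCast_zmod_val c, ← transvection_pow]
  refine pow_mem (Subgroup.subset_closure ?_) _
  fin_cases i <;> fin_cases j <;> first | exact absurd rfl hij | simp

instance fact_prime_nineteen : Fact (Nat.Prime 19) := ⟨by norm_num⟩

def tet552Gens : Fin 4 → SL(2, ZMod 19)
  | 0 => ⟨!![3, 17; 5, 16], by decide⟩
  | 1 => ⟨!![11, 3; 10, 8], by decide⟩
  | 2 => ⟨!![2, 13; 4, 17], by decide⟩
  | 3 => ⟨!![1, 7; 5, 17], by decide⟩

theorem lift_tet552Gens_mem_center :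
    ∀ r ∈ tetRels 5 5 2, lift tet552Gens r ∈ Subgroup.center SL(2, ZMod 19) := by
  have h_pm_one : ∀ A : SL(2, ZMod 19), A = 1 ∨ A = -1 → A ∈ Subgroup.center _ := by
    rintro A (rfl | rfl)
    exacts [one_mem _, neg_one_mem_center]
  simp only [tetRels, Set.mem_insert_iff, Set.mem_singleton_iff]
  rintro r (rfl | rfl | rfl | rfl | rfl | rfl | rfl) <;>
    simp only [map_pow, _root_.map_mul, lift_apply_of] <;>
    exact h_pm_one _ (by decide)

theorem lift_tet552Gens_surjective : Function.Surjective (lift tet552Gens) := by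
  rw [← MonoidHom.range_eq_top, eq_top_iff, ← SL2.closure_transvection_one_eq_top 19,
    Subgroup.closure_le, Set.insert_subset_iff, Set.singleton_subset_iff]
  -- shortest such words, found by a breadth-first search through `SL(2, 19)`
  constructor
  · exact ⟨of 0 * of 0 * of 2 * of 0 * of 2 * of 0 * of 3 * of 1 * of 0, by
      simp only [_root_.map_mul, lift_apply_of]; decide⟩
  · exact ⟨of 1 * of 0 * of 2 * of 0 * of 1 * of 3 * of 1 * of 2 * of 1 * of 3, by
      simp only [_root_.map_mul, lift_apply_of]; decide⟩

/-- The tetrahedral group `T(5,5;2,2;2,3)` surjects onto the simple group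
`PSL(2,19)`. -/
theorem tet_5_5_2_surjects_onto_PSL219 :
    ∃ φ : PresentedGroup (tetRels 5 5 2) →* PSL2 19, Function.Surjective φ := by
  have hrels :
      ∀ r ∈ tetRels 5 5 2, lift (QuotientGroup.mk' _ ∘ tet552Gens) r = (1 : PSL2 19) := by
    intro r hr
    rw [lift_comp, MonoidHom.comp_apply, QuotientGroup.mk'_apply, QuotientGroup.eq_one_iff]
    exact lift_tet552Gens_mem_center r hr
  refine ⟨PresentedGroup.toGroup hrels, PresentedGroup.toGroup_surjective hrels ?_⟩
  rw [lift_comp, MonoidHom.coe_comp]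
  exact (QuotientGroup.mk'_surjective _).comp lift_tet552Gens_surjective
end
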